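/- For the block-structured Hadamard Response estimator p̂ with i.i.d. samples Y₁,...,Yₙ, the expected squared ℓ₂ error satisfies E[Σ_x (p̂_x − p_x)²] ≤ (12 max_j k_j / n) · ((e^ε+1)/(e^ε−1))². -/

import Mathlib

/-- Sylvester's construction of Hadamard matrices. -/
def sylvester : (n : ℕ) → Fin (2 ^ n) → Fin (2 ^ n) → ℤ
  | 0 => fun _ _ => 1
  | n + 1 => fun i j =>
      (if (i : ℕ) < 2 ^ n ∨ (j : ℕ) < 2 ^ n then 1 else -1) *
        sylvester n ⟨(i : ℕ) % 2 ^ n, Nat.mod_lt _ (Nat.two_pow_pos n)⟩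
          ⟨(j : ℕ) % 2 ^ n, Nat.mod_lt _ (Nat.two_pow_pos n)⟩

/-- The block-structured Hadamard-response channel: input `(j, i)` (element `i`
of block `j`, with `|X_j| = k j`) is mapped to an output `(j, i')` with
`i' ∈ [K_j]`, `K_j = 2^{⌈log₂(k_j+1)⌉}`, with probability `2e^ε/(K_j(1+e^ε))`
if `i'` lies in the `+1` set of Hadamard row `i+1` and `2/(K_j(1+e^ε))`
otherwise; outputs in other blocks have probability `0`. -/
noncomputable def bsChannel (m : ℕ) (k : Fin m → ℕ) (ε : ℝ)
    (x : (j : Fin m) × Fin (k j))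
    (y : (j : Fin m) × Fin (2 ^ Nat.clog 2 (k j + 1))) : ℝ :=
  if h : y.1 = x.1 then
    if sylvester (Nat.clog 2 (k x.1 + 1))
        ⟨(x.2 : ℕ) + 1, by
          have := Nat.le_pow_clog (b := 2) (by norm_num) (k x.1 + 1)
          have := x.2.isLt; omega⟩
        (Fin.cast (by rw [h]) y.2) = 1 then
      2 * Real.exp ε / ((2 ^ Nat.clog 2 (k x.1 + 1) : ℝ) * (1 + Real.exp ε))
    else
      2 / ((2 ^ Nat.clog 2 (k x.1 + 1) : ℝ) * (1 + Real.exp ε))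
  else 0

/-- Membership of an output `y` in the Hadamard `+1` set `S_x` of input `x`
(in particular `y` must lie in the same block as `x`). -/
def bsInS (m : ℕ) (k : Fin m → ℕ)
    (x : (j : Fin m) × Fin (k j))
    (y : (j : Fin m) × Fin (2 ^ Nat.clog 2 (k j + 1))) : Bool :=
  if h : y.1 = x.1 then
    decide (sylvester (Nat.clog 2 (k x.1 + 1))
      ⟨(x.2 : ℕ) + 1, by
        have := Nat.le_pow_clog (b := 2) (by norm_num) (k x.1 + 1)
        have := x.2.isLt; omega⟩
      (Fin.cast (by rw [h]) y.2) = 1)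
  else false

/-!
Inside block `j`, with `K = 2 ^ ⌈log₂ (k j + 1)⌉` and `β = (e^ε - 1) / (e^ε + 1)`, the channel
gives output `i` probability `(1 + β H_r i) / K`, where `H_r` is the Sylvester–Hadamard row
attached to the input, and the single-sample estimator of `p_x` is `H_r i / β` on the block of
`x` and `0` elsewhere. Orthogonality of the rows, together with the vanishing sums of all rows
but the first, makes this estimator unbiased, and its square is `β⁻²` on the block of `x`.
The empirical mean of `n` independent copies therefore has mean squared error at most
`E[f_x(Y)²] / n`, and summing over `x` counts each output once per element of its block,
which gives `β⁻² max_j k_j / n`.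
-/

theorem sylvester_mul_self :
    ∀ (n : ℕ) (i j : Fin (2 ^ n)), sylvester n i j * sylvester n i j = 1
  | 0, _, _ => rfl
  | n + 1, i, j => by
    have ih := sylvester_mul_self n ⟨i % 2 ^ n, Nat.mod_lt _ (Nat.two_pow_pos n)⟩
      ⟨j % 2 ^ n, Nat.mod_lt _ (Nat.two_pow_pos n)⟩
    simp only [sylvester]
    split <;> linear_combination ih

theorem sylvester_zero_left :
    ∀ (n : ℕ) (j : Fin (2 ^ n)), sylvester n ⟨0, Nat.two_pow_pos n⟩ j = 1
  | 0, _ => rfl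
  | n + 1, j => by
    simp only [sylvester, Nat.zero_mod, Nat.two_pow_pos, true_or, if_true, one_mul]
    exact sylvester_zero_left n _

theorem Fin.sum_univ_two_pow_succ {M : Type*} [AddCommMonoid M] (n : ℕ)
    (f : Fin (2 ^ (n + 1)) → M) :
    ∑ j, f j = ∑ j : Fin (2 ^ n),
      (f ⟨j, by have := j.isLt; omega⟩ + f ⟨2 ^ n + j, by have := j.isLt; omega⟩) := by
  rw [← Fin.sum_congr' f (by omega : 2 ^ n + 2 ^ n = 2 ^ (n + 1)), Fin.sum_univ_add,
    ← Finset.sum_add_distrib]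
  rfl

theorem Fin.ext_iff_mod_two_pow {n : ℕ} {a b : Fin (2 ^ (n + 1))} :
    a = b ↔ (a : ℕ) % 2 ^ n = b % 2 ^ n ∧ ((a : ℕ) < 2 ^ n ↔ (b : ℕ) < 2 ^ n) := by
  have hmod (c : Fin (2 ^ (n + 1))) :
      (c : ℕ) % 2 ^ n = if (c : ℕ) < 2 ^ n then (c : ℕ) else (c : ℕ) - 2 ^ n := by
    split_ifs with hc
    · exact Nat.mod_eq_of_lt hc
    · rw [Nat.mod_eq_sub_mod (not_lt.mp hc), Nat.mod_eq_of_lt (by have := c.isLt; omega)]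
  rw [Fin.ext_iff, hmod, hmod]
  have := a.isLt; have := b.isLt
  split_ifs <;> omega

theorem sylvester_orthogonal :
    ∀ (n : ℕ) (a b : Fin (2 ^ n)),
      ∑ j, sylvester n a j * sylvester n b j = if a = b then 2 ^ n else 0
  | 0, a, b => by
    rw [if_pos (Fin.ext (by have := a.isLt; have := b.isLt; simp_all))]
    rfl
  | n + 1, a, b => by
    let low (c : Fin (2 ^ (n + 1))) : Fin (2 ^ n) :=
      ⟨c % 2 ^ n, Nat.mod_lt _ (Nat.two_pow_pos n)⟩
    let sign (c : Fin (2 ^ (n + 1))) : ℤ := if (c : ℕ) < 2 ^ n then 1 else -1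
    -- the right half of row `c` is its left half times `sign c`
    have hsplit : ∑ j, sylvester (n + 1) a j * sylvester (n + 1) b j
        = (1 + sign a * sign b) * ∑ j, sylvester n (low a) j * sylvester n (low b) j := by
      rw [Fin.sum_univ_two_pow_succ, Finset.mul_sum]
      refine Finset.sum_congr rfl fun j _ => ?_
      simp only [sylvester, sign, low, j.isLt, or_true, if_true, Nat.mod_eq_of_lt j.isLt,
        Nat.add_mod_left, add_lt_iff_neg_left, not_lt_zero, or_false]
      ring
    rw [hsplit, sylvester_orthogonal n]
    -- rows in different halves have `sign a * sign b = -1`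
    simp only [Fin.ext_iff_mod_two_pow (a := a), sign, low, Fin.mk.injEq]
    split_ifs <;> simp_all [pow_succ] <;> omega

theorem sum_sylvester_of_ne_zero (n : ℕ) (a : Fin (2 ^ n)) (ha : (a : ℕ) ≠ 0) :
    ∑ j, sylvester n a j = 0 := by
  have h := sylvester_orthogonal n a ⟨0, Nat.two_pow_pos n⟩
  simp only [sylvester_zero_left, mul_one] at h
  rwa [if_neg (fun h => ha (congrArg Fin.val h))] at h

theorem Fintype.sum_sigma_eq_sum_fiber {α M : Type*} {σ : α → Type*} [Fintype α]
    [DecidableEq α] [∀ a, Fintype (σ a)] [AddCommMonoid M] (f : Sigma σ → M) (a : α)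
    (hf : ∀ y : Sigma σ, y.1 ≠ a → f y = 0) : ∑ y, f y = ∑ i, f ⟨a, i⟩ := by
  rw [Fintype.sum_sigma, Fintype.sum_eq_single a]
  exact fun b hb => Finset.sum_eq_zero fun i _ => hf ⟨b, i⟩ hb

section BlockChannel

variable {m : ℕ} {k : Fin m → ℕ} {ε : ℝ}

-- Row `0` of a Sylvester matrix is constant, hence the shift by one.
def bsRow (x : (j : Fin m) × Fin (k j)) : Fin (2 ^ Nat.clog 2 (k x.1 + 1)) :=
  ⟨x.2 + 1, by have := Nat.le_pow_clog (b := 2) (by norm_num) (k x.1 + 1); omega⟩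

theorem bsRow_mk_inj {j : Fin m} {i i' : Fin (k j)} :
    bsRow (⟨j, i⟩ : (j : Fin m) × Fin (k j)) = bsRow ⟨j, i'⟩ ↔ i = i' := by
  simp [bsRow, Fin.ext_iff]

theorem bsChannel_of_ne {x : (j : Fin m) × Fin (k j)}
    {y : (j : Fin m) × Fin (2 ^ Nat.clog 2 (k j + 1))} (h : y.1 ≠ x.1) : bsChannel m k ε x y = 0 :=
  dif_neg h

theorem bsChannel_mk (x : (j : Fin m) × Fin (k j)) (i : Fin (2 ^ Nat.clog 2 (k x.1 + 1))) :
    bsChannel m k ε x ⟨x.1, i⟩ = (1 + (Real.exp ε - 1) / (Real.exp ε + 1) *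
      sylvester _ (bsRow x) i) / 2 ^ Nat.clog 2 (k x.1 + 1) := by
  rw [bsChannel, dif_pos rfl]
  change (if sylvester _ (bsRow x) i = 1 then _ else _) = _
  rcases mul_self_eq_one_iff.mp (sylvester_mul_self _ (bsRow x) i) with h | h
  · rw [if_pos h, h]; field_simp; ring
  · rw [if_neg (by rw [h]; decide), h]; field_simp; ring

theorem bsChannel_nonneg (x : (j : Fin m) × Fin (k j))
    (y : (j : Fin m) × Fin (2 ^ Nat.clog 2 (k j + 1))) : 0 ≤ bsChannel m k ε x y := by
  unfold bsChannel
  split_ifs <;> positivity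

theorem sum_bsChannel (x : (j : Fin m) × Fin (k j)) : ∑ y, bsChannel m k ε x y = 1 := by
  rw [Fintype.sum_sigma_eq_sum_fiber _ x.1 fun _ => bsChannel_of_ne]
  simp only [bsChannel_mk, ← Finset.sum_div, Finset.sum_add_distrib, ← Finset.mul_sum]
  have hrow : ∑ i, (sylvester _ (bsRow x) i : ℝ) = 0 := by
    exact_mod_cast sum_sylvester_of_ne_zero _ _ (Nat.succ_ne_zero _)
  rw [hrow]
  simp

variable (m k ε) in
noncomputable def bsEstimator (x : (j : Fin m) × Fin (k j))
    (y : (j : Fin m) × Fin (2 ^ Nat.clog 2 (k j + 1))) : ℝ :=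
  2 * (Real.exp ε + 1) / (Real.exp ε - 1) *
    ((if bsInS m k x y then 1 else 0) - 1 / 2 * (if y.1 = x.1 then 1 else 0))

theorem bsEstimator_of_ne {x : (j : Fin m) × Fin (k j)}
    {y : (j : Fin m) × Fin (2 ^ Nat.clog 2 (k j + 1))} (h : y.1 ≠ x.1) :
    bsEstimator m k ε x y = 0 := by
  simp [bsEstimator, bsInS, h]

theorem bsEstimator_mk (x : (j : Fin m) × Fin (k j)) (i : Fin (2 ^ Nat.clog 2 (k x.1 + 1))) :
    bsEstimator m k ε x ⟨x.1, i⟩ =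
      (Real.exp ε + 1) / (Real.exp ε - 1) * sylvester _ (bsRow x) i := by
  have hS : bsInS m k x ⟨x.1, i⟩ = decide (sylvester _ (bsRow x) i = 1) := by
    rw [bsInS, dif_pos rfl]; rfl
  rw [bsEstimator, hS, if_pos rfl]
  rcases mul_self_eq_one_iff.mp (sylvester_mul_self _ (bsRow x) i) with h | h <;>
    · rw [h]; norm_num; ring

theorem bsEstimator_sq (x : (j : Fin m) × Fin (k j))
    (y : (j : Fin m) × Fin (2 ^ Nat.clog 2 (k j + 1))) :
    bsEstimator m k ε x y ^ 2 =
      ((Real.exp ε + 1) / (Real.exp ε - 1)) ^ 2 * if y.1 = x.1 then 1 else 0 := by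
  by_cases h : y.1 = x.1
  · obtain ⟨j, i⟩ := y
    obtain ⟨j', i'⟩ := x
    subst h
    have hsq : (sylvester _ (bsRow ⟨j, i'⟩) i : ℝ) ^ 2 = 1 := by
      exact_mod_cast (sq _).trans (sylvester_mul_self _ _ i)
    rw [bsEstimator_mk ⟨j, i'⟩ i, if_pos rfl, mul_pow, hsq, mul_one]
  · rw [bsEstimator_of_ne h, if_neg h]
    simp

theorem sum_bsChannel_mul_bsEstimator (hε : ε ≠ 0) (x' x : (j : Fin m) × Fin (k j)) :
    ∑ y, bsChannel m k ε x' y * bsEstimator m k ε x y = if x' = x then 1 else 0 := by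
  by_cases h : x'.1 = x.1
  · obtain ⟨j, i'⟩ := x'
    obtain ⟨j', i⟩ := x
    subst h
    rw [Fintype.sum_sigma_eq_sum_fiber _ j fun _ hy => by rw [bsChannel_of_ne hy, zero_mul]]
    have hE : Real.exp ε - 1 ≠ 0 := sub_ne_zero.mpr (by simpa using hε)
    have hterm (l) : bsChannel m k ε ⟨j, i'⟩ ⟨j, l⟩ * bsEstimator m k ε ⟨j, i⟩ ⟨j, l⟩
        = ((Real.exp ε + 1) / (Real.exp ε - 1) * sylvester _ (bsRow ⟨j, i⟩) l
            + sylvester _ (bsRow ⟨j, i'⟩) l * sylvester _ (bsRow ⟨j, i⟩) l)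
          / 2 ^ Nat.clog 2 (k j + 1) := by
      rw [bsChannel_mk ⟨j, i'⟩ l, bsEstimator_mk ⟨j, i⟩ l]
      field_simp
    have hrow : ∑ l, (sylvester _ (bsRow ⟨j, i⟩) l : ℝ) = 0 := by
      exact_mod_cast sum_sylvester_of_ne_zero _ (bsRow ⟨j, i⟩) (Nat.succ_ne_zero _)
    have horth : ∑ l, (sylvester _ (bsRow ⟨j, i'⟩) l * sylvester _ (bsRow ⟨j, i⟩) l : ℝ)
        = if i' = i then 2 ^ Nat.clog 2 (k j + 1) else 0 := by
      have h := sylvester_orthogonal _ (bsRow ⟨j, i'⟩) (bsRow ⟨j, i⟩)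
      simp only [bsRow_mk_inj] at h
      exact_mod_cast h
    simp only [hterm, ← Finset.sum_div, Finset.sum_add_distrib, ← Finset.mul_sum, hrow, horth,
      Sigma.mk.inj_iff, heq_eq_eq, true_and]
    split_ifs <;> field_simp <;> ring
  · rw [if_neg (fun h' => h (congrArg Sigma.fst h'))]
    refine Finset.sum_eq_zero fun y _ => ?_
    by_cases hy : y.1 = x'.1
    · rw [bsEstimator_of_ne (hy ▸ h), mul_zero]
    · rw [bsChannel_of_ne hy, zero_mul]

theorem sum_bsEstimator_sq (y : (j : Fin m) × Fin (2 ^ Nat.clog 2 (k j + 1))) :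
    ∑ x, bsEstimator m k ε x y ^ 2 = ((Real.exp ε + 1) / (Real.exp ε - 1)) ^ 2 * k y.1 := by
  rw [Finset.sum_congr rfl fun x _ => bsEstimator_sq x y, ← Finset.mul_sum,
    Fintype.sum_sigma_eq_sum_fiber _ y.1 fun x hx => if_neg (Ne.symm hx)]
  simp

theorem mean_bsEstimator_eq {ι : Type*} [Fintype ι] (N : ℝ) (x : (j : Fin m) × Fin (k j))
    (ω : ι → (j : Fin m) × Fin (2 ^ Nat.clog 2 (k j + 1))) :
    1 / N * ∑ t, bsEstimator m k ε x (ω t) =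
      2 * (Real.exp ε + 1) / (Real.exp ε - 1) *
        (1 / N * (∑ t, if bsInS m k x (ω t) then (1 : ℝ) else 0)
          - 1 / 2 * (1 / N * ∑ t, if (ω t).1 = x.1 then (1 : ℝ) else 0)) := by
  simp only [bsEstimator, ← Finset.mul_sum, Finset.sum_sub_distrib]
  ring

variable (m k ε) in
noncomputable def bsOutputDist (p : ((j : Fin m) × Fin (k j)) → ℝ)
    (y : (j : Fin m) × Fin (2 ^ Nat.clog 2 (k j + 1))) : ℝ :=
  ∑ x, p x * bsChannel m k ε x y

variable {p : ((j : Fin m) × Fin (k j)) → ℝ}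

theorem bsOutputDist_nonneg (hp0 : ∀ x, 0 ≤ p x)
    (y : (j : Fin m) × Fin (2 ^ Nat.clog 2 (k j + 1))) : 0 ≤ bsOutputDist m k ε p y :=
  Finset.sum_nonneg fun x _ => mul_nonneg (hp0 x) (bsChannel_nonneg x y)

theorem sum_bsOutputDist (hp1 : ∑ x, p x = 1) : ∑ y, bsOutputDist m k ε p y = 1 := by
  simp only [bsOutputDist]
  rw [Finset.sum_comm]
  simp only [← Finset.mul_sum, sum_bsChannel, mul_one, hp1]

theorem sum_bsOutputDist_mul_bsEstimator (hε : ε ≠ 0) (x : (j : Fin m) × Fin (k j)) :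
    ∑ y, bsOutputDist m k ε p y * bsEstimator m k ε x y = p x := by
  simp only [bsOutputDist, Finset.sum_mul, mul_assoc]
  rw [Finset.sum_comm]
  simp [← Finset.mul_sum, sum_bsChannel_mul_bsEstimator hε]

theorem sum_bsOutputDist_mul_sum_bsEstimator_sq_le (hp0 : ∀ x, 0 ≤ p x) (hp1 : ∑ x, p x = 1) :
    ∑ y, bsOutputDist m k ε p y * ∑ x, bsEstimator m k ε x y ^ 2 ≤
      ((Real.exp ε + 1) / (Real.exp ε - 1)) ^ 2 * (Finset.univ.sup k : ℕ) := by
  calc ∑ y, bsOutputDist m k ε p y * ∑ x, bsEstimator m k ε x y ^ 2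
      ≤ ∑ y, bsOutputDist m k ε p y *
          (((Real.exp ε + 1) / (Real.exp ε - 1)) ^ 2 * (Finset.univ.sup k : ℕ)) := by
        gcongr with y
        · exact bsOutputDist_nonneg hp0 y
        · rw [sum_bsEstimator_sq]
          gcongr
          exact Finset.le_sup (Finset.mem_univ _)
    _ = ((Real.exp ε + 1) / (Real.exp ε - 1)) ^ 2 * (Finset.univ.sup k : ℕ) := by
        rw [← Finset.sum_mul, sum_bsOutputDist hp1, one_mul]

end BlockChannel

section IndependentSamples

variable {ι Y : Type*} [Fintype ι] [DecidableEq ι] [Fintype Y] {q : Y → ℝ}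

theorem sum_pi_prod_mul_apply_mul_apply (hq : ∑ y, q y = 1) {g : Y → ℝ}
    (hg : ∑ y, q y * g y = 0) (s t : ι) :
    ∑ ω : ι → Y, (∏ u, q (ω u)) * (g (ω s) * g (ω t)) =
      if s = t then ∑ y, q y * g y ^ 2 else 0 := by
  let F (u : ι) (y : Y) : ℝ := q y * (if u = s then g y else 1) * (if u = t then g y else 1)
  have hF (ω : ι → Y) : (∏ u, q (ω u)) * (g (ω s) * g (ω t)) = ∏ u, F u (ω u) := by
    simp only [F, Finset.prod_mul_distrib, Finset.prod_ite_eq', Finset.mem_univ, if_true,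
      mul_assoc]
  simp only [hF, ← Fintype.prod_sum]
  split_ifs with hst
  · subst hst
    rw [Fintype.prod_eq_single s fun u hu => by simp [F, hu, hq]]
    simp only [F, if_true, sq, mul_assoc]
  · exact Finset.prod_eq_zero (Finset.mem_univ s) (by simp [F, hst, hg])

theorem sum_pi_prod_mul_sum_sq (hq : ∑ y, q y = 1) {g : Y → ℝ} (hg : ∑ y, q y * g y = 0) :
    ∑ ω : ι → Y, (∏ u, q (ω u)) * (∑ t, g (ω t)) ^ 2 =
      Fintype.card ι * ∑ y, q y * g y ^ 2 := by
  have hexpand (ω : ι → Y) : (∏ u, q (ω u)) * (∑ t, g (ω t)) ^ 2 =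
      ∑ s, ∑ t, (∏ u, q (ω u)) * (g (ω s) * g (ω t)) := by
    rw [sq, Fintype.sum_mul_sum]
    simp only [Finset.mul_sum]
  simp only [hexpand]
  rw [Finset.sum_comm]
  simp only [Finset.sum_comm (γ := ι → Y) (t := Finset.univ),
    sum_pi_prod_mul_apply_mul_apply hq hg]
  simp

theorem sum_pi_prod_mul_mean_sub_sq (hq : ∑ y, q y = 1) (hι : Fintype.card ι ≠ 0)
    (f : Y → ℝ) :
    ∑ ω : ι → Y, (∏ u, q (ω u)) *
        (1 / Fintype.card ι * ∑ t, f (ω t) - ∑ y, q y * f y) ^ 2 =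
      (∑ y, q y * f y ^ 2 - (∑ y, q y * f y) ^ 2) / Fintype.card ι := by
  set μ := ∑ y, q y * f y
  have hcentered : ∑ y, q y * (f y - μ) = 0 := by
    simp only [mul_sub, Finset.sum_sub_distrib, ← Finset.sum_mul, hq, one_mul, μ, sub_self]
  have hmean (ω : ι → Y) :
      1 / Fintype.card ι * ∑ t, f (ω t) - μ = 1 / Fintype.card ι * ∑ t, (f (ω t) - μ) := by
    rw [Finset.sum_sub_distrib, Finset.sum_const, Finset.card_univ, nsmul_eq_mul]
    field_simp
  have hvar : ∑ y, q y * (f y - μ) ^ 2 = ∑ y, q y * f y ^ 2 - μ ^ 2 := by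
    have h (y : Y) :
        q y * (f y - μ) ^ 2 = q y * f y ^ 2 - 2 * μ * (q y * f y) + μ ^ 2 * q y := by
      ring
    simp only [h, Finset.sum_add_distrib, Finset.sum_sub_distrib, ← Finset.mul_sum, hq]
    ring
  simp only [hmean, mul_pow, mul_left_comm _ ((1 / _ : ℝ) ^ 2), ← Finset.mul_sum,
    sum_pi_prod_mul_sum_sq hq hcentered, hvar]
  field_simp

end IndependentSamples

theorem bs_estimator_l2_bound_general (m : ℕ) (k : Fin m → ℕ)
    (ε : ℝ) (hε : 0 < ε)
    (p : ((j : Fin m) × Fin (k j)) → ℝ) (hp0 : ∀ x, 0 ≤ p x) (hp1 : ∑ x, p x = 1)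
    (n : ℕ) (hn : 0 < n) :
    ∑ ω : Fin n → ((j : Fin m) × Fin (2 ^ Nat.clog 2 (k j + 1))),
        (∏ t, ∑ x, p x * bsChannel m k ε x (ω t)) *
        (∑ x, ((2 * (Real.exp ε + 1) / (Real.exp ε - 1)) *
              ((1 / (n : ℝ)) * (∑ t, if bsInS m k x (ω t) then (1 : ℝ) else 0)
                - (1 / 2) * ((1 / (n : ℝ)) * ∑ t, if (ω t).1 = x.1 then (1 : ℝ) else 0))
            - p x) ^ 2)
      ≤ 12 * ((Finset.univ.sup k : ℕ) : ℝ) / (n : ℝ)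
          * ((Real.exp ε + 1) / (Real.exp ε - 1)) ^ 2 := by
  have hq := sum_bsOutputDist (k := k) (ε := ε) hp1
  have hunbiased := sum_bsOutputDist_mul_bsEstimator (p := p) hε.ne'
  have hcard : Fintype.card (Fin n) ≠ 0 := by simpa using hn.ne'
  calc _ = ∑ ω : Fin n → ((j : Fin m) × Fin (2 ^ Nat.clog 2 (k j + 1))), ∑ x,
          (∏ t, bsOutputDist m k ε p (ω t)) *
            (1 / n * ∑ t, bsEstimator m k ε x (ω t) - p x) ^ 2 := by
        refine Finset.sum_congr rfl fun ω _ => ?_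
        rw [Finset.mul_sum]
        refine Finset.sum_congr rfl fun x _ => ?_
        rw [mean_bsEstimator_eq]
        rfl
    _ = ∑ x, (∑ y, bsOutputDist m k ε p y * bsEstimator m k ε x y ^ 2 - p x ^ 2) / n := by
        rw [Finset.sum_comm]
        refine Finset.sum_congr rfl fun x _ => ?_
        have h := sum_pi_prod_mul_mean_sub_sq hq hcard (bsEstimator m k ε x)
        rwa [hunbiased, Fintype.card_fin] at h
    _ = (∑ y, bsOutputDist m k ε p y * ∑ x, bsEstimator m k ε x y ^ 2 - ∑ x, p x ^ 2) / n := by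
        rw [← Finset.sum_div, Finset.sum_sub_distrib, Finset.sum_comm]
        simp only [Finset.mul_sum]
    _ ≤ ((Real.exp ε + 1) / (Real.exp ε - 1)) ^ 2 * (Finset.univ.sup k : ℕ) / n := by
        gcongr
        linarith [sum_bsOutputDist_mul_sum_bsEstimator_sq_le (ε := ε) hp0 hp1,
          Finset.sum_nonneg fun x (_ : x ∈ Finset.univ) => sq_nonneg (p x)]
    _ ≤ 12 * (((Real.exp ε + 1) / (Real.exp ε - 1)) ^ 2 * (Finset.univ.sup k : ℕ) / n) :=
        le_mul_of_one_le_left (by positivity) (by norm_num)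
    _ = _ := by ring

/-- Expected squared ℓ₂ error of the block-structured Hadamard-response
estimator with `n` i.i.d. samples:
`E[Σ_x (p̂_x - p_x)²] ≤ (12 max_j k_j / n) ((e^ε+1)/(e^ε-1))²`. -/
theorem bs_estimator_l2_bound (m : ℕ) (k : Fin m → ℕ) (hk : ∀ j, 0 < k j)
    (ε : ℝ) (hε : 0 < ε)
    (p : ((j : Fin m) × Fin (k j)) → ℝ) (hp0 : ∀ x, 0 ≤ p x) (hp1 : ∑ x, p x = 1)
    (n : ℕ) (hn : 0 < n) :
    ∑ ω : Fin n → ((j : Fin m) × Fin (2 ^ Nat.clog 2 (k j + 1))),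
        (∏ t, ∑ x, p x * bsChannel m k ε x (ω t)) *
        (∑ x, ((2 * (Real.exp ε + 1) / (Real.exp ε - 1)) *
              ((1 / (n : ℝ)) * (∑ t, if bsInS m k x (ω t) then (1 : ℝ) else 0)
                - (1 / 2) * ((1 / (n : ℝ)) * ∑ t, if (ω t).1 = x.1 then (1 : ℝ) else 0))
            - p x) ^ 2)
      ≤ 12 * ((Finset.univ.sup k : ℕ) : ℝ) / (n : ℝ)
          * ((Real.exp ε + 1) / (Real.exp ε - 1)) ^ 2 :=
  bs_estimator_l2_bound_general m k ε hε p hp0 hp1 n hn
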